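/- Let A = [[B, C], [C*, D]] be a complex positive semidefinite block matrix with B and D square blocks of equal size and D positive definite, and let q be a real number with 1 ≤ q < ∞. If ||B||_q = ||C||_q = ||D||_q, then B = C D^{-1} C*. -/

import Mathlib

open Matrix
open scoped ComplexOrder

/-- Matrix power of a Hermitian (positive semidefinite) matrix via the
continuous functional calculus: `A ^ q`. -/
noncomputable def hermPow {n : Type*} [Fintype n] [DecidableEq n]
    (A : Matrix n n ℂ) (q : ℝ) : Matrix n n ℂ :=
  cfc (fun x : ℝ => x ^ q) A

/-- The square root of a positive semidefinite matrix, as `Matrix.PosSemidef.sqrt` was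
defined in the older Mathlib (no longer present). -/
noncomputable def posSemidefSqrt {n : Type*} [Fintype n] [DecidableEq n] {A : Matrix n n ℂ}
    (hA : A.PosSemidef) : Matrix n n ℂ :=
  (hA.1.eigenvectorUnitary : Matrix n n ℂ) *
    diagonal (fun i => ((Real.sqrt (hA.1.eigenvalues i) : ℝ) : ℂ)) *
    (star hA.1.eigenvectorUnitary : Matrix n n ℂ)

/-- Schatten `q`-norm of a complex matrix `T`:
`‖T‖_q = (Tr(|T|^q))^(1/q)` with `|T| = (Tᴴ T)^(1/2)`. -/
noncomputable def schattenQ {m n : Type*} [Fintype m] [Fintype n] [DecidableEq n]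
    (q : ℝ) (T : Matrix m n ℂ) : ℝ :=
  ((hermPow (posSemidefSqrt (Matrix.posSemidef_conjTranspose_mul_self T)) q).trace).re

/-- Geometric mean of positive definite matrices:
`A # B = A^(1/2) (A^(-1/2) B A^(-1/2))^(1/2) A^(1/2)`. -/
noncomputable def geomMean {n : Type*} [Fintype n] [DecidableEq n]
    (A B : Matrix n n ℂ) : Matrix n n ℂ :=
  hermPow A (1/2) * hermPow (hermPow A (-(1/2)) * B * hermPow A (-(1/2))) (1/2) *
    hermPow A (1/2)

/-- The Thompson-type metric `δ_∞(A, B) = max_{λ ∈ spec(A B⁻¹)} |log λ|`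
(for positive definite `A`, `B` the eigenvalues of `A B⁻¹` are positive reals). -/
noncomputable def deltaInf {n : Type*} [Fintype n] [DecidableEq n]
    (A B : Matrix n n ℂ) : ℝ :=
  sSup {x : ℝ | ∃ μ ∈ spectrum ℂ (A * B⁻¹), x = |Real.log ‖μ‖|}

/-!
Put `S = C D⁻¹ Cᴴ`; positivity of the block matrix says `S ≤ B` (Schur complement).
For a positive semidefinite `T` and an orthonormal family `uᵢ`, Jensen's inequality in an
eigenbasis of `T` together with Bessel's inequality gives `∑ ⟪uᵢ, T uᵢ⟫^q ≤ Tr T^q`.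
Take `vᵢ` orthonormal eigenvectors of `|C|` with eigenvalues `rᵢ`. The vectors `C vᵢ / rᵢ`
(for `rᵢ ≠ 0`) are orthonormal with `⟪C vᵢ / rᵢ, S (C vᵢ / rᵢ)⟫ = rᵢ² ⟪vᵢ, D⁻¹ vᵢ⟫`, and
`⟪vᵢ, D vᵢ⟫ ⟪vᵢ, D⁻¹ vᵢ⟫ ≥ 1`, so Cauchy–Schwarz gives
`(Tr |C|^q)² ≤ Tr S^q · Tr D^q`. With equal norms this forces `Tr B^q ≤ Tr S^q`. But in an
eigenbasis of `S` the diagonal of `B` dominates that of `S`, so `Tr S^q ≤ Tr B^q`, with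
equality only if the two diagonals agree; then `Tr (B - S) = 0` and `B = S`.
-/

open scoped InnerProductSpace

section

variable {𝕜 E ι : Type*} [RCLike 𝕜] [NormedAddCommGroup E] [InnerProductSpace 𝕜 E] [Fintype ι]

theorem LinearMap.IsSymmetric.re_inner_map_self_eq_sum {T : E →ₗ[𝕜] E} (hT : T.IsSymmetric)
    (b : OrthonormalBasis ι 𝕜 E) {μ : ι → ℝ} (hb : ∀ j, T (b j) = (μ j : 𝕜) • b j) (x : E) :
    RCLike.re ⟪x, T x⟫_𝕜 = ∑ j, ‖⟪b j, x⟫_𝕜‖ ^ 2 * μ j := by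
  have hcoord : ∀ j, ⟪b j, T x⟫_𝕜 = (μ j : 𝕜) * ⟪b j, x⟫_𝕜 := fun j => by
    rw [← hT, hb, inner_smul_left, RCLike.conj_ofReal]
  rw [← b.sum_inner_mul_inner, map_sum]
  refine Finset.sum_congr rfl fun j _ => ?_
  rw [hcoord, mul_left_comm, ← inner_conj_symm, RCLike.conj_mul]
  norm_cast
  exact mul_comm _ _

end

namespace Matrix

variable {𝕜 n : Type*} [RCLike 𝕜] [Fintype n] [DecidableEq n] {A : Matrix n n 𝕜}

theorem IsHermitian.toEuclideanLin_eigenvectorBasis (hA : A.IsHermitian) (j : n) :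
    A.toEuclideanLin (hA.eigenvectorBasis j) = (hA.eigenvalues j : 𝕜) • hA.eigenvectorBasis j :=
  WithLp.ofLp_injective 2 <| by
    rw [ofLp_toLpLin, toLin'_apply, hA.mulVec_eigenvectorBasis, WithLp.ofLp_smul,
      RCLike.real_smul_eq_coe_smul (K := 𝕜)]

theorem IsHermitian.re_inner_toEuclideanLin_self_eq_sum (hA : A.IsHermitian)
    (x : EuclideanSpace 𝕜 n) :
    RCLike.re ⟪x, A.toEuclideanLin x⟫_𝕜 =
      ∑ j, ‖⟪hA.eigenvectorBasis j, x⟫_𝕜‖ ^ 2 * hA.eigenvalues j :=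
  (isSymmetric_toEuclideanLin_iff.mpr hA).re_inner_map_self_eq_sum _
    hA.toEuclideanLin_eigenvectorBasis x

theorem PosDef.toEuclideanLin_inv_eigenvectorBasis (hA : A.PosDef) (j : n) :
    A⁻¹.toEuclideanLin (hA.1.eigenvectorBasis j) =
      ((hA.1.eigenvalues j)⁻¹ : ℝ) • hA.1.eigenvectorBasis j := by
  have hev : (hA.1.eigenvalues j : 𝕜) ≠ 0 := RCLike.ofReal_ne_zero.mpr (hA.eigenvalues_pos j).ne'
  have hinv : A⁻¹ * A = 1 := nonsing_inv_mul A ((isUnit_iff_isUnit_det A).mp hA.isUnit)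
  have := congrArg A⁻¹.toEuclideanLin (hA.1.toEuclideanLin_eigenvectorBasis j)
  rw [← LinearMap.comp_apply, ← toLpLin_mul_same, hinv, toLpLin_one, LinearMap.id_apply,
    map_smul] at this
  rw [RCLike.real_smul_eq_coe_smul (K := 𝕜), RCLike.ofReal_inv, eq_inv_smul_iff₀ hev]
  exact this.symm

theorem PosDef.norm_pow_four_le_re_inner_mul_re_inner_inv (hA : A.PosDef)
    (x : EuclideanSpace 𝕜 n) :
    ‖x‖ ^ 4 ≤ RCLike.re ⟪x, A.toEuclideanLin x⟫_𝕜 * RCLike.re ⟪x, A⁻¹.toEuclideanLin x⟫_𝕜 := by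
  have hpos := hA.eigenvalues_pos
  have hinv : RCLike.re ⟪x, A⁻¹.toEuclideanLin x⟫_𝕜 =
      ∑ j, ‖⟪hA.1.eigenvectorBasis j, x⟫_𝕜‖ ^ 2 * (hA.1.eigenvalues j)⁻¹ :=
    (isSymmetric_toEuclideanLin_iff.mpr hA.inv.1).re_inner_map_self_eq_sum _
      (fun j => by
        rw [hA.toEuclideanLin_inv_eigenvectorBasis, RCLike.real_smul_eq_coe_smul (K := 𝕜)]) x
  rw [hA.1.re_inner_toEuclideanLin_self_eq_sum, hinv, show 4 = 2 * 2 from rfl, pow_mul,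
    ← hA.1.eigenvectorBasis.sum_sq_norm_inner_right x]
  refine Finset.sum_sq_le_sum_mul_sum_of_sq_le_mul _ (fun j _ => by have := hpos j; positivity)
    (fun j _ => by have := hpos j; positivity) (fun j _ => le_of_eq ?_)
  field_simp [(hpos j).ne']

theorem PosSemidef.sum_rpow_re_inner_le_sum_rpow_eigenvalues (hA : A.PosSemidef) {q : ℝ}
    (hq : 1 ≤ q) {ι : Type*} [Fintype ι] {u : ι → EuclideanSpace 𝕜 n} (hu : Orthonormal 𝕜 u) :
    ∑ i, RCLike.re ⟪u i, A.toEuclideanLin (u i)⟫_𝕜 ^ q ≤ ∑ j, hA.1.eigenvalues j ^ q := by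
  let e := hA.1.eigenvectorBasis
  let ev := hA.1.eigenvalues
  have hev : ∀ j, 0 ≤ ev j := hA.eigenvalues_nonneg
  have hrow : ∀ i, ∑ j, ‖⟪e j, u i⟫_𝕜‖ ^ 2 = 1 := fun i => by
    rw [e.sum_sq_norm_inner_right, hu.1 i, one_pow]
  have hcol : ∀ j, ∑ i, ‖⟪e j, u i⟫_𝕜‖ ^ 2 ≤ 1 := fun j => by
    simp_rw [norm_inner_symm (e j)]
    simpa [e.orthonormal.1 j] using hu.sum_inner_products_le (s := Finset.univ) (e j)
  calc ∑ i, RCLike.re ⟪u i, A.toEuclideanLin (u i)⟫_𝕜 ^ q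
      = ∑ i, (∑ j, ‖⟪e j, u i⟫_𝕜‖ ^ 2 * ev j) ^ q := by
        simp_rw [hA.1.re_inner_toEuclideanLin_self_eq_sum]; rfl
    _ ≤ ∑ i, ∑ j, ‖⟪e j, u i⟫_𝕜‖ ^ 2 * ev j ^ q := Finset.sum_le_sum fun i _ =>
        Real.rpow_arith_mean_le_arith_mean_rpow _ _ _ (fun _ _ => by positivity) (hrow i)
          (fun j _ => hev j) hq
    _ = ∑ j, (∑ i, ‖⟪e j, u i⟫_𝕜‖ ^ 2) * ev j ^ q := by
        rw [Finset.sum_comm]; simp_rw [Finset.sum_mul]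
    _ ≤ ∑ j, ev j ^ q := Finset.sum_le_sum fun j _ =>
        mul_le_of_le_one_left (Real.rpow_nonneg (hev j) q) (hcol j)

end Matrix

section Schatten

variable {n : Type*} [Fintype n] [DecidableEq n]

theorem Matrix.IsHermitian.re_trace_hermPow {A : Matrix n n ℂ} (hA : A.IsHermitian) (q : ℝ) :
    (hermPow A q).trace.re = ∑ i, hA.eigenvalues i ^ q := by
  rw [hermPow, hA.cfc_eq, Matrix.IsHermitian.cfc, Unitary.conjStarAlgAut_apply,
    Matrix.trace_mul_comm, ← Matrix.mul_assoc, Unitary.coe_star_mul_self, Matrix.one_mul,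
    Matrix.trace_diagonal, Complex.re_sum]
  rfl

theorem posSemidefSqrt_eq_cfc {A : Matrix n n ℂ} (hA : A.PosSemidef) :
    posSemidefSqrt hA = cfc Real.sqrt A := by
  rw [hA.1.cfc_eq]
  rfl

theorem posSemidef_posSemidefSqrt {A : Matrix n n ℂ} (hA : A.PosSemidef) :
    (posSemidefSqrt hA).PosSemidef :=
  (Matrix.posSemidef_diagonal_iff.mpr fun i => by
    exact_mod_cast Real.sqrt_nonneg (hA.1.eigenvalues i)).mul_mul_conjTranspose_same _

theorem posSemidefSqrt_mul_self {A : Matrix n n ℂ} (hA : A.PosSemidef) :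
    posSemidefSqrt hA * posSemidefSqrt hA = A := by
  have : IsSelfAdjoint A := hA.1
  rw [posSemidefSqrt_eq_cfc, ← cfc_mul Real.sqrt Real.sqrt A]
  conv_rhs => rw [← cfc_id' ℝ A]
  refine cfc_congr fun x hx => ?_
  obtain ⟨i, rfl⟩ := hA.1.spectrum_real_eq_range_eigenvalues ▸ hx
  exact Real.mul_self_sqrt (hA.eigenvalues_nonneg i)

theorem posSemidefSqrt_conjTranspose_mul_self {P : Matrix n n ℂ} (hP : P.PosSemidef) :
    posSemidefSqrt (Matrix.posSemidef_conjTranspose_mul_self P) = P := by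
  have : IsSelfAdjoint P := hP.1
  have hsq : P * P = cfc (fun x : ℝ => x * x) P := by
    rw [cfc_mul (fun x : ℝ => x) (fun x : ℝ => x) P, cfc_id' ℝ P]
  rw [posSemidefSqrt_eq_cfc, hP.1.eq, hsq, ← cfc_comp' Real.sqrt (fun x : ℝ => x * x) P]
  conv_rhs => rw [← cfc_id' ℝ P]
  refine cfc_congr fun x hx => ?_
  obtain ⟨i, rfl⟩ := hP.1.spectrum_real_eq_range_eigenvalues ▸ hx
  exact Real.sqrt_mul_self (hP.eigenvalues_nonneg i)

theorem schattenQ_eq_sum_rpow_eigenvalues {P : Matrix n n ℂ} (hP : P.PosSemidef) (q : ℝ) :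
    schattenQ q P = ∑ i, hP.1.eigenvalues i ^ q := by
  rw [schattenQ, posSemidefSqrt_conjTranspose_mul_self hP, hP.1.re_trace_hermPow]

end Schatten

namespace Matrix

section Conjugation

variable {𝕜 m n ι : Type*} [RCLike 𝕜] [Fintype m] [DecidableEq m] [Fintype n] [DecidableEq n]

theorem inner_toEuclideanLin_toEuclideanLin (C : Matrix m n 𝕜) (x y : EuclideanSpace 𝕜 n) :
    ⟪C.toEuclideanLin x, C.toEuclideanLin y⟫_𝕜 = ⟪x, (Cᴴ * C).toEuclideanLin y⟫_𝕜 := by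
  rw [toLpLin_mul_same, LinearMap.comp_apply, toEuclideanLin_conjTranspose_eq_adjoint,
    LinearMap.adjoint_inner_right]

theorem inner_toEuclideanLin_mul_mul_conjTranspose (C : Matrix m n 𝕜) (M : Matrix n n 𝕜)
    (x : EuclideanSpace 𝕜 m) :
    ⟪x, (C * M * Cᴴ).toEuclideanLin x⟫_𝕜 =
      ⟪Cᴴ.toEuclideanLin x, M.toEuclideanLin (Cᴴ.toEuclideanLin x)⟫_𝕜 := by
  rw [toLpLin_mul_same, toLpLin_mul_same, LinearMap.comp_apply, LinearMap.comp_apply,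
    ← LinearMap.adjoint_inner_left, ← toEuclideanLin_conjTranspose_eq_adjoint]

theorem orthonormal_inv_smul_toEuclideanLin {C : Matrix m n 𝕜} {v : ι → EuclideanSpace 𝕜 n}
    (hv : Orthonormal 𝕜 v) {r : ι → ℝ} (hr : ∀ i, r i ≠ 0)
    (hCv : ∀ i, (Cᴴ * C).toEuclideanLin (v i) = ((r i ^ 2 : ℝ) : 𝕜) • v i) :
    Orthonormal 𝕜 fun i => ((r i : 𝕜)⁻¹) • C.toEuclideanLin (v i) := by
  classical
  rw [orthonormal_iff_ite] at hv ⊢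
  intro i j
  rw [inner_smul_left, inner_smul_right, inner_toEuclideanLin_toEuclideanLin, hCv,
    inner_smul_right, hv]
  split_ifs with h
  · subst h
    have : (r i : 𝕜) ≠ 0 := RCLike.ofReal_ne_zero.mpr (hr i)
    simp only [map_inv₀, RCLike.conj_ofReal, RCLike.ofReal_pow, mul_one]
    field_simp
  · simp

theorem sum_rpow_sq_mul_re_inner_le_sum_rpow_eigenvalues [Fintype ι] {C : Matrix m n 𝕜}
    {M : Matrix n n 𝕜} (hM : M.PosSemidef) {q : ℝ} (hq : 1 ≤ q) {v : ι → EuclideanSpace 𝕜 n}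
    (hv : Orthonormal 𝕜 v) {r : ι → ℝ}
    (hCv : ∀ i, (Cᴴ * C).toEuclideanLin (v i) = ((r i ^ 2 : ℝ) : 𝕜) • v i) :
    ∑ i, (r i ^ 2 * RCLike.re ⟪v i, M.toEuclideanLin (v i)⟫_𝕜) ^ q ≤
      ∑ j, (hM.mul_mul_conjTranspose_same C).1.eigenvalues j ^ q := by
  let u : {i // r i ≠ 0} → EuclideanSpace 𝕜 m :=
    fun i => ((r i : 𝕜)⁻¹) • C.toEuclideanLin (v i)
  have hu : Orthonormal 𝕜 u := orthonormal_inv_smul_toEuclideanLin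
    (hv.comp _ Subtype.val_injective) (fun i => i.2) (fun i => hCv i)
  have hCu : ∀ i, Cᴴ.toEuclideanLin (u i) = (r i : 𝕜) • v i := fun i => by
    have : (r i : 𝕜) ≠ 0 := RCLike.ofReal_ne_zero.mpr i.2
    rw [map_smul, ← LinearMap.comp_apply, ← toLpLin_mul_same, hCv, smul_smul]
    congr 1
    push_cast
    field_simp
  have hval : ∀ i, RCLike.re ⟪u i, (C * M * Cᴴ).toEuclideanLin (u i)⟫_𝕜 =
      r i ^ 2 * RCLike.re ⟪v i, M.toEuclideanLin (v i)⟫_𝕜 := fun i => by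
    rw [inner_toEuclideanLin_mul_mul_conjTranspose, hCu, map_smul, inner_smul_left,
      inner_smul_right, RCLike.conj_ofReal, ← mul_assoc, ← RCLike.ofReal_mul,
      RCLike.re_ofReal_mul]
    ring
  have hq0 : q ≠ 0 := by positivity
  rw [← Fintype.sum_subtype_add_sum_subtype (fun i => r i ≠ 0)]
  calc _ = ∑ i : {i // r i ≠ 0}, (r i ^ 2 * RCLike.re ⟪v i, M.toEuclideanLin (v i)⟫_𝕜) ^ q := by
        rw [add_eq_left]
        refine Finset.sum_eq_zero fun i _ => ?_
        rw [not_not.mp i.2, sq, zero_mul, zero_mul, Real.zero_rpow hq0]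
    _ ≤ _ := by
        simp_rw [← hval]
        exact (hM.mul_mul_conjTranspose_same C).sum_rpow_re_inner_le_sum_rpow_eigenvalues hq hu

end Conjugation

end Matrix

section SchattenInequalities

variable {m n : Type*} [Fintype m] [Fintype n] [DecidableEq n]

theorem schattenQ_nonneg (q : ℝ) (T : Matrix m n ℂ) : 0 ≤ schattenQ q T := by
  have hR := posSemidef_posSemidefSqrt (posSemidef_conjTranspose_mul_self T)
  rw [schattenQ, hR.1.re_trace_hermPow]
  exact Finset.sum_nonneg fun i _ => Real.rpow_nonneg (hR.eigenvalues_nonneg i) q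

theorem schattenQ_sq_le_schattenQ_mul_inv_mul_conjTranspose_mul_schattenQ [DecidableEq m]
    {C : Matrix m n ℂ} {D : Matrix n n ℂ} (hD : D.PosDef) {q : ℝ} (hq : 1 ≤ q) :
    schattenQ q C ^ 2 ≤ schattenQ q (C * D⁻¹ * Cᴴ) * schattenQ q D := by
  have hR := posSemidef_posSemidefSqrt (posSemidef_conjTranspose_mul_self C)
  let r := hR.1.eigenvalues
  let v := hR.1.eigenvectorBasis
  have hCv : ∀ i, (Cᴴ * C).toEuclideanLin (v i) = ((r i ^ 2 : ℝ) : ℂ) • v i := fun i => by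
    rw [← posSemidefSqrt_mul_self (posSemidef_conjTranspose_mul_self C), toLpLin_mul_same,
      LinearMap.comp_apply, hR.1.toEuclideanLin_eigenvectorBasis, map_smul,
      hR.1.toEuclideanLin_eigenvectorBasis, smul_smul, ← sq, ← RCLike.ofReal_pow]
    rfl
  let a i := RCLike.re ⟪v i, D.toEuclideanLin (v i)⟫_ℂ
  let b i := RCLike.re ⟪v i, D⁻¹.toEuclideanLin (v i)⟫_ℂ
  have ha : ∀ i, 0 ≤ a i := fun i =>
    (isPositive_toEuclideanLin_iff.mpr hD.posSemidef).re_inner_nonneg_right (v i)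
  have hb : ∀ i, 0 ≤ b i := fun i =>
    (isPositive_toEuclideanLin_iff.mpr hD.inv.posSemidef).re_inner_nonneg_right (v i)
  have hab : ∀ i, 1 ≤ a i * b i := fun i => by
    have h := hD.norm_pow_four_le_re_inner_mul_re_inner_inv (v i)
    rwa [v.orthonormal.1 i, one_pow] at h
  have hSq : ∑ i, (r i ^ 2 * b i) ^ q ≤ schattenQ q (C * D⁻¹ * Cᴴ) := by
    rw [schattenQ_eq_sum_rpow_eigenvalues (hD.inv.posSemidef.mul_mul_conjTranspose_same C)]
    exact sum_rpow_sq_mul_re_inner_le_sum_rpow_eigenvalues hD.inv.posSemidef hq v.orthonormal hCv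
  have hDq : ∑ i, a i ^ q ≤ schattenQ q D := by
    rw [schattenQ_eq_sum_rpow_eigenvalues hD.posSemidef]
    exact hD.posSemidef.sum_rpow_re_inner_le_sum_rpow_eigenvalues hq v.orthonormal
  have hq0 : 0 ≤ q := by positivity
  have hterm : ∀ i, (r i ^ q) ^ 2 ≤ (r i ^ 2 * b i) ^ q * a i ^ q := fun i => calc
    (r i ^ q) ^ 2 = (r i ^ 2) ^ q := by
      rw [sq, sq, Real.mul_rpow (hR.eigenvalues_nonneg i) (hR.eigenvalues_nonneg i)]
    _ ≤ (r i ^ 2 * (b i * a i)) ^ q := Real.rpow_le_rpow (sq_nonneg _)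
      (le_mul_of_one_le_right (sq_nonneg _) (mul_comm (a i) (b i) ▸ hab i)) hq0
    _ = (r i ^ 2 * b i) ^ q * a i ^ q := by
      rw [← mul_assoc, Real.mul_rpow (mul_nonneg (sq_nonneg _) (hb i)) (ha i)]
  have hCS : (∑ i, r i ^ q) ^ 2 ≤ (∑ i, (r i ^ 2 * b i) ^ q) * ∑ i, a i ^ q :=
    Finset.sum_sq_le_sum_mul_sum_of_sq_le_mul _
      (fun i _ => Real.rpow_nonneg (mul_nonneg (sq_nonneg _) (hb i)) q)
      (fun i _ => Real.rpow_nonneg (ha i) q) (fun i _ => hterm i)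
  rw [schattenQ, hR.1.re_trace_hermPow]
  exact hCS.trans (mul_le_mul hSq hDq (Finset.sum_nonneg fun i _ => Real.rpow_nonneg (ha i) q)
    (schattenQ_nonneg q _))

theorem Matrix.PosSemidef.eq_of_posSemidef_sub_of_schattenQ_le {B S : Matrix n n ℂ}
    (hS : S.PosSemidef) (hBS : (B - S).PosSemidef) {q : ℝ} (hq : 1 ≤ q)
    (hle : schattenQ q B ≤ schattenQ q S) : B = S := by
  have hB : B.PosSemidef := by simpa using hS.add hBS
  let w := hS.1.eigenvectorBasis
  let s := hS.1.eigenvalues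
  let b j := RCLike.re ⟪w j, B.toEuclideanLin (w j)⟫_ℂ
  have hSw : ∀ j, RCLike.re ⟪w j, S.toEuclideanLin (w j)⟫_ℂ = s j := fun j => by
    rw [hS.1.toEuclideanLin_eigenvectorBasis, inner_smul_right, w.inner_eq_one, mul_one,
      RCLike.ofReal_re]
  have hdiff : ∀ j, RCLike.re ⟪w j, (B - S).toEuclideanLin (w j)⟫_ℂ = b j - s j := fun j => by
    rw [map_sub, LinearMap.sub_apply, inner_sub_right, map_sub, hSw]
  have hsb : ∀ j, s j ^ q ≤ b j ^ q := fun j =>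
    Real.rpow_le_rpow (hS.eigenvalues_nonneg j) (sub_nonneg.mp (hdiff j ▸
      (isPositive_toEuclideanLin_iff.mpr hBS).re_inner_nonneg_right (w j))) (by positivity)
  have hsum : ∑ j, b j ^ q ≤ ∑ j, s j ^ q := calc
    _ ≤ schattenQ q B := (schattenQ_eq_sum_rpow_eigenvalues hB q).symm ▸
          hB.sum_rpow_re_inner_le_sum_rpow_eigenvalues hq w.orthonormal
    _ ≤ schattenQ q S := hle
    _ = _ := schattenQ_eq_sum_rpow_eigenvalues hS q
  have hbs : ∀ j, b j = s j := fun j => by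
    have := (Finset.sum_eq_sum_iff_of_le fun j _ => hsb j).mp
      (le_antisymm (Finset.sum_le_sum fun j _ => hsb j) hsum) j (Finset.mem_univ j)
    exact ((Real.rpow_left_inj (hS.eigenvalues_nonneg j)
      ((isPositive_toEuclideanLin_iff.mpr hB).re_inner_nonneg_right (w j))
      (by positivity)).mp this).symm
  have hre : (B - S).trace.re = 0 := by
    rw [← (B - S).trace_toLin_eq (PiLp.basisFun 2 ℂ n), ← toLpLin_eq_toLin,
      LinearMap.trace_eq_sum_inner _ w, Complex.re_sum]
    exact Finset.sum_eq_zero fun j _ => (hdiff j).trans (sub_eq_zero.mpr (hbs j))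
  have htrace : (B - S).trace = 0 :=
    Complex.ext hre ((RCLike.nonneg_iff.mp hBS.trace_nonneg).2)
  exact sub_eq_zero.mp (hBS.trace_eq_zero_iff.mp htrace)

end SchattenInequalities

/-- If `[[B, C], [Cᴴ, D]]` is positive semidefinite with `D` positive definite
and `‖B‖_q = ‖C‖_q = ‖D‖_q` for some `1 ≤ q < ∞`, then `B = C D⁻¹ Cᴴ`. -/
theorem equal_norms_implies_B_eq {n : ℕ} (B C D : Matrix (Fin n) (Fin n) ℂ)
    (hA : (Matrix.fromBlocks B C Cᴴ D).PosSemidef) (hD : D.PosDef)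
    (q : ℝ) (hq : 1 ≤ q)
    (h1 : schattenQ q B = schattenQ q C) (h2 : schattenQ q C = schattenQ q D) :
    B = C * D⁻¹ * Cᴴ := by
  have := hD.isUnit.invertible
  have hS : (C * D⁻¹ * Cᴴ).PosSemidef := hD.inv.posSemidef.mul_mul_conjTranspose_same C
  refine hS.eq_of_posSemidef_sub_of_schattenQ_le ((hD.fromBlocks₂₂ B C).mp hA) hq ?_
  have hCS := schattenQ_sq_le_schattenQ_mul_inv_mul_conjTranspose_mul_schattenQ (C := C) hD hq
  rw [h2] at hCS
  rw [h1, h2]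
  nlinarith [schattenQ_nonneg q D, schattenQ_nonneg q (C * D⁻¹ * Cᴴ)]
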